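/- arXiv:0711.4152 — 2 statements merged into one kernel-verified Lean document; each statement's English description precedes it below -/
import Mathlib

section
/- Let G be a finite group, C ≤ G a subgroup, and J ⊆ C a subset invariant under conjugation by N_G(C), such that C ∩ gCg⁻¹ ⊆ J whenever g ∉ N_G(C). Then the conjugates g(C∖J)g⁻¹, as gN_G(C) ranges over the cosets of N_G(C), are pairwise disjoint, and hence |⋃_{g∈G} g(C∖J)g⁻¹| = [G : N_G(C)] · |C∖J|. -/
/-!
An element of `C \ J` that is also a conjugate `g c g⁻¹` of some `c ∈ C \ J` with `g ∉ N_G(C)`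
lies in `C ∩ gCg⁻¹ ⊆ J`, which is absurd. So the conjugates of `C \ J` are pairwise disjoint
across cosets of `N_G(C)`, while `N_G(C)` fixes `C \ J`; the union is therefore in bijection
with `G ⧸ N_G(C) × (C \ J)`.
-/

open Function Pointwise ConjAct

section Action
variable {G α : Type*} [Group G] [MulAction G α]

theorem Set.disjoint_sdiff_smul_sdiff {A J : Set α} {a : G} (h : A ∩ a • A ⊆ J) :
    Disjoint (A \ J) (a • (A \ J)) :=
  Set.disjoint_left.2 fun _ hx hax => hx.2 (h ⟨hx.1, Set.smul_set_mono Set.sdiff_subset hax⟩)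

theorem natCard_iUnion_smul_eq_index_mul_natCard {H : Subgroup G} {S : Set α}
    (hH : H ≤ MulAction.stabilizer G S)
    (hdisj : ∀ g₁ g₂ : G, g₁⁻¹ * g₂ ∉ H → Disjoint (g₁ • S) (g₂ • S)) :
    Nat.card (⋃ g : G, g • S) = H.index * Nat.card S := by
  have hcoset (g : G) : g • S = (g : G ⧸ H).out • S := by
    obtain ⟨h, hh⟩ := QuotientGroup.mk_out_eq_mul H g
    rw [hh, mul_smul, MulAction.mem_stabilizer_iff.mp (hH h.2)]
  have hpair : Pairwise (Disjoint on fun q : G ⧸ H => q.out • S) := fun q q' hne =>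
    hdisj q.out q'.out fun hmem => hne <| by
      simpa using (QuotientGroup.eq.mpr hmem : (q.out : G ⧸ H) = q'.out)
  calc Nat.card (⋃ g : G, g • S)
      = Nat.card (⋃ q : G ⧸ H, q.out • S) := by
        rw [Set.iUnion_congr hcoset, QuotientGroup.mk_surjective.iUnion_comp (fun q => q.out • S)]
    _ = Nat.card ((G ⧸ H) × S) := Nat.card_congr <| (Set.unionEqSigmaOfDisjoint hpair).trans <|
        Equiv.sigmaEquivProdOfEquiv fun q => (Equiv.Set.image _ S (MulAction.injective q.out)).symm
    _ = H.index * Nat.card S := Nat.card_prod _ _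

end Action

section Conj
variable {G : Type*} [Group G]

theorem image_conj_eq_toConjAct_smul (g : G) (S : Set G) :
    (fun x => g * x * g⁻¹) '' S = toConjAct g • S := by
  simp only [← toConjAct_smul]
  rfl

theorem toConjAct_smul_coe_of_mem_normalizer {C : Subgroup G} {n : G}
    (hn : n ∈ Subgroup.normalizer (C : Set G)) : toConjAct n • (C : Set G) = C := by
  rw [← Subgroup.coe_pointwise_smul, Subgroup.conjAct_pointwise_smul_eq_self hn]

end Conj

theorem card_union_conjugates_of_generic_general {G : Type*} [Group G]
    (C : Subgroup G) (J : Set G)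
    (hJinv : ∀ n ∈ (Subgroup.normalizer (C : Set G)), (fun x => n * x * n⁻¹) '' J = J)
    (hint : ∀ g : G, g ∉ (Subgroup.normalizer (C : Set G)) →
      (C : Set G) ∩ ((fun x => g * x * g⁻¹) '' (C : Set G)) ⊆ J) :
    (∀ g₁ g₂ : G, g₁⁻¹ * g₂ ∉ (Subgroup.normalizer (C : Set G)) →
      Disjoint ((fun x => g₁ * x * g₁⁻¹) '' ((C : Set G) \ J))
        ((fun x => g₂ * x * g₂⁻¹) '' ((C : Set G) \ J))) ∧
    Nat.card (⋃ g : G, (fun x => g * x * g⁻¹) '' ((C : Set G) \ J))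
      = (Subgroup.normalizer (C : Set G)).index * Nat.card ((C : Set G) \ J : Set G) := by
  set N := Subgroup.normalizer (C : Set G)
  set S := (C : Set G) \ J
  simp only [image_conj_eq_toConjAct_smul] at hJinv hint ⊢
  have hstab : ∀ n ∈ N, toConjAct n • S = S := fun n hn => by
    rw [Set.smul_set_sdiff, toConjAct_smul_coe_of_mem_normalizer hn, hJinv n hn]
  have hdisj : ∀ g₁ g₂ : G, g₁⁻¹ * g₂ ∉ N → Disjoint (toConjAct g₁ • S) (toConjAct g₂ • S) := by
    intro g₁ g₂ hg
    rw [Set.disjoint_smul_set_left, smul_smul, ← toConjAct_inv, ← toConjAct_mul]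
    exact Set.disjoint_sdiff_smul_sdiff (hint _ hg)
  refine ⟨hdisj, ?_⟩
  rw [toConjAct.surjective.iUnion_comp (· • S),
    ← N.index_comap_of_surjective (f := ofConjAct.toMonoidHom) ofConjAct.surjective]
  exact natCard_iUnion_smul_eq_index_mul_natCard (fun c hc => hstab _ hc)
    fun c₁ c₂ h => hdisj (ofConjAct c₁) (ofConjAct c₂) (by simpa using h)

/-- Finite analogue of the genericity lemma: if `C ∩ C^g ⊆ J` whenever `g ∉ N_G(C)`,
and `J` is invariant under conjugation by `N_G(C)`, then the conjugates of `C \ J`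
by distinct cosets of `N_G(C)` are pairwise disjoint, and the union of all conjugates
of `C \ J` has `[G : N_G(C)] · |C \ J|` elements. -/
theorem card_union_conjugates_of_generic {G : Type*} [Group G] [Finite G]
    (C : Subgroup G) (J : Set G) (hJC : J ⊆ (C : Set G))
    (hJinv : ∀ n ∈ (Subgroup.normalizer (C : Set G)), (fun x => n * x * n⁻¹) '' J = J)
    (hint : ∀ g : G, g ∉ (Subgroup.normalizer (C : Set G)) →
      (C : Set G) ∩ ((fun x => g * x * g⁻¹) '' (C : Set G)) ⊆ J) :
    (∀ g₁ g₂ : G, g₁⁻¹ * g₂ ∉ (Subgroup.normalizer (C : Set G)) →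
      Disjoint ((fun x => g₁ * x * g₁⁻¹) '' ((C : Set G) \ J))
        ((fun x => g₂ * x * g₂⁻¹) '' ((C : Set G) \ J))) ∧
    Nat.card (⋃ g : G, (fun x => g * x * g⁻¹) '' ((C : Set G) \ J))
      = (Subgroup.normalizer (C : Set G)).index * Nat.card ((C : Set G) \ J : Set G) :=
  card_union_conjugates_of_generic_general C J hJinv hint
end

section
/- Let G be a finite group in which every Sylow subgroup is abelian. Then the derived subgroup of G intersects the center of G trivially: G' ∩ Z(G) = 1. -/
/-!
The transfer `G → H` into an abelian subgroup `H` of finite index factors through `G/G'`, and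
on a central element `z` it is `z ↦ z ^ [G : H]`. Hence every `z ∈ G' ∩ Z(G)` satisfies
`z ^ [G : P] = 1` for each Sylow subgroup `P`, so the order of `z` is prime to every prime.
-/

open Subgroup MonoidHom
open scoped IsMulCommutative

theorem pow_index_eq_one_of_mem_commutator_inf_center {G : Type*} [Group G] (H : Subgroup G)
    [H.FiniteIndex] [IsMulCommutative H] {z : G} (hz : z ∈ commutator G ⊓ center G) :
    z ^ H.index = 1 := by
  have hcentral : ∀ (k : ℕ) (g : G), g⁻¹ * z ^ k * g ∈ H → g⁻¹ * z ^ k * g = z ^ k :=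
    fun k g _ => by rw [mem_center_iff.mp (pow_mem hz.2 k) g⁻¹, inv_mul_cancel_right]
  have htransfer : transfer (MonoidHom.id H) z = 1 :=
    Abelianization.commutator_subset_ker _ hz.1
  rw [transfer_eq_pow _ z hcentral] at htransfer
  exact congrArg Subtype.val htransfer

theorem eq_one_of_forall_sylow_pow_index_eq_one {G : Type*} [Group G] [Finite G] {z : G}
    (h : ∀ p : ℕ, p.Prime → ∀ P : Sylow p G, z ^ P.index = 1) : z = 1 := by
  by_contra hz
  obtain ⟨p, hp, hpz⟩ := Nat.exists_prime_and_dvd (orderOf_eq_one_iff.not.mpr hz)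
  have := Fact.mk hp
  obtain ⟨P⟩ : Nonempty (Sylow p G) := inferInstance
  exact P.not_dvd_index (hpz.trans (orderOf_dvd_of_pow_eq_one (h p hp P)))

/-- Taunt's theorem: in a finite group with all Sylow subgroups abelian, the derived
subgroup meets the center trivially. -/
theorem taunt_derived_inter_center {G : Type*} [Group G] [Finite G]
    (hsyl : ∀ (p : ℕ), p.Prime → ∀ P : Sylow p G, ∀ a b : (P : Subgroup G), a * b = b * a) :
    commutator G ⊓ Subgroup.center G = ⊥ := by
  refine eq_bot_iff.mpr fun z hz => mem_bot.mpr ?_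
  refine eq_one_of_forall_sylow_pow_index_eq_one fun p hp P => ?_
  have : IsMulCommutative (P : Subgroup G) := ⟨⟨hsyl p hp P⟩⟩
  exact pow_index_eq_one_of_mem_commutator_inf_center (P : Subgroup G) hz
end
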